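/- Let p, q : ℝ → ℝ satisfy the cubic Hamilton equations p' = -(b p^2 + 2c p q + d q^2), q' = a p^2 + 2b p q + c q^2, let F = (b^2 - ac) p^2 + (bc - ad) p q + (c^2 - bd) q^2 and psi = (1/3)(a p^3 + 3b p^2 q + 3c p q^2 + d q^3). Then the quantity g_3 = 4 F^3 - (F')^2 is a constant of the motion (its time derivative vanishes). -/

import Mathlib

/-!
The flow is Hamiltonian for `ψ = f / 3`, where `f = a p³ + 3b p² q + 3c p q² + d q³`, so `f` is
conserved. `F` is, up to the factor `-1/36`, the Hessian of `f`, and its derivative along the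
flow is the cubic covariant `G` of `f`. The classical syzygy of binary cubics
`4 F³ - G² = -Δ f²`, with `Δ` the discriminant of `f`, then exhibits `g₃ = 4 F³ - (F')²` as
a function of the conserved quantity `f`.
-/

namespace BinaryCubic

def eval (a b c d x y : ℝ) : ℝ :=
  a*x^3 + 3*b*x^2*y + 3*c*x*y^2 + d*y^3

def discr (a b c d : ℝ) : ℝ :=
  a^2*d^2 - 6*a*b*c*d + 4*a*c^3 + 4*b^3*d - 3*b^2*c^2

def hessianCovariant (a b c d x y : ℝ) : ℝ :=
  (b^2 - a*c)*x^2 + (b*c - a*d)*x*y + (c^2 - b*d)*y^2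

def cubicCovariant (a b c d x y : ℝ) : ℝ :=
  (3*a*b*c - 2*b^3 - a^2*d)*x^3 + (6*a*c^2 - 3*b^2*c - 3*a*b*d)*x^2*y
    + (3*b*c^2 - 6*b^2*d + 3*a*c*d)*x*y^2 + (2*c^3 - 3*b*c*d + a*d^2)*y^3

theorem four_mul_hessianCovariant_pow_three_sub_cubicCovariant_sq (a b c d x y : ℝ) :
    4 * hessianCovariant a b c d x y ^ 3 - cubicCovariant a b c d x y ^ 2
      = -discr a b c d * eval a b c d x y ^ 2 := by
  unfold hessianCovariant cubicCovariant discr eval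
  ring

/-- Hamilton's equations `p' = -∂ψ/∂q`, `q' = ∂ψ/∂p` for `ψ = eval a b c d p q / 3`. -/
def IsHamiltonFlow (a b c d : ℝ) (p q : ℝ → ℝ) : Prop :=
  ∀ t, HasDerivAt p (-(b*(p t)^2 + 2*c*(p t)*(q t) + d*(q t)^2)) t ∧
    HasDerivAt q (a*(p t)^2 + 2*b*(p t)*(q t) + c*(q t)^2) t

theorem isHamiltonFlow_of_deriv {a b c d : ℝ} {p q : ℝ → ℝ}
    (hp1 : Differentiable ℝ p) (hq1 : Differentiable ℝ q)
    (hp : ∀ t, deriv p t = -(b*(p t)^2 + 2*c*(p t)*(q t) + d*(q t)^2))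
    (hq : ∀ t, deriv q t = a*(p t)^2 + 2*b*(p t)*(q t) + c*(q t)^2) :
    IsHamiltonFlow a b c d p q := fun t =>
  ⟨hp t ▸ (hp1 t).hasDerivAt, hq t ▸ (hq1 t).hasDerivAt⟩

namespace IsHamiltonFlow

variable {a b c d : ℝ} {p q : ℝ → ℝ}

theorem hasDerivAt_eval (h : IsHamiltonFlow a b c d p q) (t : ℝ) :
    HasDerivAt (fun t => eval a b c d (p t) (q t)) 0 t := by
  obtain ⟨hp, hq⟩ := h t
  refine (((((hp.fun_pow 3).const_mul a).fun_add
    (((hp.fun_pow 2).const_mul (3*b)).fun_mul hq)).fun_add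
    ((hp.const_mul (3*c)).fun_mul (hq.fun_pow 2))).fun_add
    ((hq.fun_pow 3).const_mul d)).congr_deriv ?_
  push_cast
  ring

theorem hasDerivAt_hessianCovariant (h : IsHamiltonFlow a b c d p q) (t : ℝ) :
    HasDerivAt (fun t => hessianCovariant a b c d (p t) (q t))
      (cubicCovariant a b c d (p t) (q t)) t := by
  obtain ⟨hp, hq⟩ := h t
  refine ((((hp.fun_pow 2).const_mul (b^2 - a*c)).fun_add
    ((hp.const_mul (b*c - a*d)).fun_mul hq)).fun_add
    ((hq.fun_pow 2).const_mul (c^2 - b*d))).congr_deriv ?_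
  unfold cubicCovariant
  push_cast
  ring

end IsHamiltonFlow

end BinaryCubic

open BinaryCubic in
theorem cubic_g3_conserved_general (a b c d : ℝ) (p q : ℝ → ℝ)
    (hp1 : Differentiable ℝ p) (hq1 : Differentiable ℝ q)
    (hp : ∀ t, deriv p t = -(b*(p t)^2 + 2*c*(p t)*(q t) + d*(q t)^2))
    (hq : ∀ t, deriv q t = a*(p t)^2 + 2*b*(p t)*(q t) + c*(q t)^2) :
    ∀ t, deriv (fun t =>
      4 * ((b^2 - a*c)*(p t)^2 + (b*c - a*d)*(p t)*(q t) + (c^2 - b*d)*(q t)^2)^3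
      - (deriv (fun t =>
          (b^2 - a*c)*(p t)^2 + (b*c - a*d)*(p t)*(q t) + (c^2 - b*d)*(q t)^2) t)^2) t
      = 0 := by
  have hflow := isHamiltonFlow_of_deriv hp1 hq1 hp hq
  have hF : deriv (fun t => hessianCovariant a b c d (p t) (q t))
      = fun t => cubicCovariant a b c d (p t) (q t) :=
    funext fun t => (hflow.hasDerivAt_hessianCovariant t).deriv
  have hg₃ : (fun t => 4 * hessianCovariant a b c d (p t) (q t) ^ 3
        - deriv (fun t => hessianCovariant a b c d (p t) (q t)) t ^ 2)
      = fun t => -discr a b c d * eval a b c d (p t) (q t) ^ 2 := by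
    rw [hF]
    exact funext fun t => four_mul_hessianCovariant_pow_three_sub_cubicCovariant_sq ..
  intro t
  change deriv (fun t => 4 * hessianCovariant a b c d (p t) (q t) ^ 3
    - deriv (fun t => hessianCovariant a b c d (p t) (q t)) t ^ 2) t = 0
  rw [hg₃]
  simpa using (((hflow.hasDerivAt_eval t).pow 2).const_mul (-discr a b c d)).deriv

theorem cubic_g3_conserved (a b c d : ℝ) (p q : ℝ → ℝ)
    (hp1 : Differentiable ℝ p) (hq1 : Differentiable ℝ q)
    (hp2 : Differentiable ℝ (deriv p)) (hq2 : Differentiable ℝ (deriv q))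
    (hp : ∀ t, deriv p t = -(b*(p t)^2 + 2*c*(p t)*(q t) + d*(q t)^2))
    (hq : ∀ t, deriv q t = a*(p t)^2 + 2*b*(p t)*(q t) + c*(q t)^2) :
    ∀ t, deriv (fun t =>
      4 * ((b^2 - a*c)*(p t)^2 + (b*c - a*d)*(p t)*(q t) + (c^2 - b*d)*(q t)^2)^3
      - (deriv (fun t =>
          (b^2 - a*c)*(p t)^2 + (b*c - a*d)*(p t)*(q t) + (c^2 - b*d)*(q t)^2) t)^2) t
      = 0 :=
  cubic_g3_conserved_general a b c d p q hp1 hq1 hp hq
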